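/- (Club guessing) If κ and λ are regular cardinals with κ⁺ < λ, then there exists a sequence ⟨c_δ : δ < λ, cf(δ) = κ⟩ such that each c_δ is a closed unbounded subset of δ of order type κ, and for every closed unbounded E ⊆ λ there exists δ < λ with cf(δ) = κ and c_δ ⊆ E. -/

import Mathlib

open Cardinal Set

noncomputable section

/-- Cardinality of a set of ordinals. -/
def scard (s : Set Ordinal.{0}) : Cardinal.{1} := Cardinal.mk s

/-- The set of accumulation points of a set of ordinals `p`:
ordinals `α` such that `p ∩ α` is nonempty and unbounded in `α`. -/
def accSet (p : Set Ordinal.{0}) : Set Ordinal.{0} :=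
  {α | (p ∩ Set.Iio α).Nonempty ∧ α = sSup (p ∩ Set.Iio α)}

/-- A set of ordinals is closed iff it contains all of its accumulation
points below its supremum. -/
def IsClosedCond (q : Set Ordinal.{0}) : Prop :=
  accSet q ∩ Set.Iio (sSup q) ⊆ q

/-- Order type of a set of ordinals. -/
def otp (s : Set Ordinal.{0}) : Ordinal.{1} :=
  Ordinal.type ((· < ·) : s → s → Prop)

/-- Membership in the poset `P`: subsets of `μ` of cardinality `μ`. -/
def InP (μ : Cardinal.{0}) (p : Set Ordinal.{0}) : Prop :=
  p ⊆ Set.Iio μ.ord ∧ scard p = Cardinal.lift.{1,0} μ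

/-- The almost-inclusion ordering: `p₁ ≤ p₂` iff `|p₁ \ p₂| < μ`. -/
def condLe (μ : Cardinal.{0}) (p₁ p₂ : Set Ordinal.{0}) : Prop :=
  scard (p₁ \ p₂) < Cardinal.lift.{1,0} μ

/-- Membership in the poset `Q`: closed subsets of `μ` of cardinality `μ`. -/
def InQ (μ : Cardinal.{0}) (q : Set Ordinal.{0}) : Prop :=
  InP μ q ∧ IsClosedCond q

/-- The interval `[μₙ, μₙ₊₁)`. -/
def interval (μseq : ℕ → Cardinal.{0}) (n : ℕ) : Set Ordinal.{0} :=
  Set.Ico ((μseq n).ord) ((μseq (n+1)).ord)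

/-- `a(q) = {n : q ∩ [μₙ, μₙ₊₁) ≠ ∅}`. -/
def aSet (μseq : ℕ → Cardinal.{0}) (q : Set Ordinal.{0}) : Set ℕ :=
  {n | (q ∩ interval μseq n).Nonempty}

/-- Normality: letting `⟨mₙ⟩` enumerate `a(q)` increasingly,
`otp (q ∩ [μ_{mₙ}, μ_{mₙ+1})) = μₙ + 1`. -/
def IsNormalCond (μseq : ℕ → Cardinal.{0}) (q : Set Ordinal.{0}) : Prop :=
  ∃ m : ℕ → ℕ, StrictMono m ∧ Set.range m = aSet μseq q ∧
    ∀ n, otp (q ∩ interval μseq (m n)) = Ordinal.lift.{1,0} ((μseq n).ord + 1)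

/-- `χ⁺_q(n) = sup (q ∩ [μₙ, μₙ₊₁))`. -/
def chiP (μseq : ℕ → Cardinal.{0}) (q : Set Ordinal.{0}) (n : ℕ) : Ordinal.{0} :=
  sSup (q ∩ interval μseq n)

/-- `χ⁻_q(n) = min (q ∩ [μₙ, μₙ₊₁))`. -/
def chiM (μseq : ℕ → Cardinal.{0}) (q : Set Ordinal.{0}) (n : ℕ) : Ordinal.{0} :=
  sInf (q ∩ interval μseq n)

/-- `μₙ` is a strictly increasing sequence of regular cardinals with supremum `μ`. -/
def GoodSeq (μ : Cardinal.{0}) (μseq : ℕ → Cardinal.{0}) : Prop :=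
  StrictMono μseq ∧ (∀ n, (μseq n).IsRegular) ∧ μ = ⨆ n, μseq n


/-- `c` is a club subset of `δ`: `c ⊆ δ`, unbounded in `δ`, and closed
(contains its accumulation points below `δ`). -/
def IsClubIn (c : Set Ordinal.{0}) (δ : Ordinal.{0}) : Prop :=
  c ⊆ Set.Iio δ ∧ (∀ α < δ, ∃ β ∈ c, α < β) ∧ accSet c ∩ Set.Iio δ ⊆ c

/-! Shelah's argument. Fix for every `δ` of cofinality `κ` a club `b δ ⊆ δ` of order type `κ`.
A set `D` induces the candidate `c_δ^D`, the closure in `δ` of `{sup (D ∩ β) | β ∈ b δ}`; it is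
again a club of type `κ` as soon as `D` is unbounded in `δ`. If no candidate sequence guesses clubs,
choose for every `D` a club `F D` on which `c^D` fails, and iterate `D_i = ⋂_{j<i} F D_j` for
`i ≤ κ⁺`. For `δ` of cofinality `κ` in which `D_{κ⁺}` is unbounded, every `i < κ⁺` has some
`β ∈ b δ` with `sup (D_i ∩ β) ∉ D_{i+1}`. Only `κ` many `β` are available, so one of them serves
cofinally many `i`; but `i ↦ sup (D_i ∩ β)` is non-increasing, so it stabilises along these `i`,
a contradiction. -/

open Ordinal Order

theorem mem_accSet_iff {p : Set Ordinal.{0}} {α : Ordinal.{0}} :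
    α ∈ accSet p ↔ (p ∩ Iio α).Nonempty ∧ ∀ γ < α, ∃ β ∈ p, γ < β ∧ β < α := by
  refine ⟨fun ⟨hne, hsup⟩ => ⟨hne, fun γ hγ => ?_⟩, fun ⟨hne, hub⟩ => ⟨hne, ?_⟩⟩
  · obtain ⟨β, hβ, hγβ⟩ := exists_lt_of_lt_csSup hne (hsup ▸ hγ)
    exact ⟨β, hβ.1, hγβ, hβ.2⟩
  · refine le_antisymm (le_of_forall_lt fun γ hγ => ?_) (csSup_le hne fun x hx => hx.2.le)
    obtain ⟨β, hβ, hγβ, hβα⟩ := hub γ hγ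
    exact hγβ.trans_le (le_csSup ⟨α, fun _ hx => hx.2.le⟩ ⟨hβ, hβα⟩)

theorem accSet_mono {p q : Set Ordinal.{0}} (h : p ⊆ q) : accSet p ⊆ accSet q := by
  intro α hα
  obtain ⟨hne, hub⟩ := mem_accSet_iff.mp hα
  refine mem_accSet_iff.mpr ⟨hne.mono (inter_subset_inter_left _ h), fun γ hγ => ?_⟩
  obtain ⟨β, hβ, hγβ, hβα⟩ := hub γ hγ
  exact ⟨β, h hβ, hγβ, hβα⟩

theorem accSet_union_accSet_subset (p : Set Ordinal.{0}) : accSet (p ∪ accSet p) ⊆ accSet p := by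
  intro α hα
  obtain ⟨⟨β, hβ, hβα⟩, hub⟩ := mem_accSet_iff.mp hα
  have hbelow : ∀ β ∈ p ∪ accSet p, ∀ γ < β, ∃ β' ∈ p, γ < β' ∧ β' ≤ β := by
    rintro β (hβ | hβ) γ hγ
    · exact ⟨β, hβ, hγ, le_rfl⟩
    · obtain ⟨β', hβ', h1, h2⟩ := (mem_accSet_iff.mp hβ).2 γ hγ
      exact ⟨β', hβ', h1, h2.le⟩
  refine mem_accSet_iff.mpr ⟨?_, fun γ hγ => ?_⟩
  · rcases hβ with hβ | hβ
    · exact ⟨β, hβ, hβα⟩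
    · obtain ⟨β', hβ', hβ'β⟩ := (mem_accSet_iff.mp hβ).1
      exact ⟨β', hβ', mem_Iio.mpr (hβ'β.trans hβα)⟩
  · obtain ⟨β, hβ, hγβ, hβα⟩ := hub γ hγ
    obtain ⟨β', hβ', h1, h2⟩ := hbelow β hβ γ hγβ
    exact ⟨β', hβ', h1, h2.trans_lt hβα⟩

theorem IsClubIn.sSup_mem {D : Set Ordinal.{0}} {θ : Ordinal.{0}} (hD : IsClubIn D θ)
    {s : Set Ordinal.{0}} (hs : s ⊆ D) (hne : s.Nonempty) (hlt : sSup s < θ) : sSup s ∈ D := by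
  by_cases h : sSup s ∈ s
  · exact hs h
  refine hD.2.2 ⟨mem_accSet_iff.mpr ⟨?_, fun γ hγ => ?_⟩, hlt⟩
  · obtain ⟨β, hβ⟩ := hne
    have : β ≤ sSup s := le_csSup ⟨θ, fun x hx => (hD.1 (hs hx)).le⟩ hβ
    exact ⟨β, hs hβ, this.lt_of_ne fun he => h (he ▸ hβ)⟩
  · obtain ⟨β, hβ, hγβ⟩ := exists_lt_of_lt_csSup hne hγ
    have : β ≤ sSup s := le_csSup ⟨θ, fun x hx => (hD.1 (hs hx)).le⟩ hβ
    exact ⟨β, hs hβ, hγβ, this.lt_of_ne fun he => h (he ▸ hβ)⟩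

theorem IsClubIn.sInf_inter_Ioi {C : Set Ordinal.{0}} {θ : Ordinal.{0}} (hC : IsClubIn C θ)
    {x : Ordinal.{0}} (hx : x < θ) :
    sInf (C ∩ Ioi x) ∈ C ∧ x < sInf (C ∩ Ioi x) ∧ sInf (C ∩ Ioi x) < θ := by
  obtain ⟨β, hβ, hxβ⟩ := hC.2.1 x hx
  have hmem := csInf_mem (s := C ∩ Ioi x) ⟨β, hβ, hxβ⟩
  exact ⟨hmem.1, hmem.2, hC.1 hmem.1⟩

def closureBelow (S : Set Ordinal.{0}) (δ : Ordinal.{0}) : Set Ordinal.{0} :=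
  Iio δ ∩ (S ∪ accSet S)

theorem isClubIn_closureBelow {S : Set Ordinal.{0}} {δ : Ordinal.{0}} (hS : S ⊆ Iio δ)
    (hu : ∀ α < δ, ∃ β ∈ S, α < β) : IsClubIn (closureBelow S δ) δ := by
  refine ⟨inter_subset_left, fun α hα => ?_, fun α ⟨hα, hαδ⟩ => ⟨hαδ, Or.inr ?_⟩⟩
  · obtain ⟨β, hβ, hαβ⟩ := hu α hα
    exact ⟨β, ⟨hS hβ, Or.inl hβ⟩, hαβ⟩
  · exact accSet_union_accSet_subset S (accSet_mono inter_subset_right hα)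

theorem closureBelow_subset {S T : Set Ordinal.{0}} {δ θ : Ordinal.{0}} (hST : S ⊆ T)
    (hδθ : δ ≤ θ) (hT : accSet T ∩ Iio θ ⊆ T) : closureBelow S δ ⊆ T := by
  rintro α ⟨hαδ, hα | hα⟩
  · exact hST hα
  · exact hT ⟨accSet_mono hST hα, hαδ.trans_le hδθ⟩

theorem lift_cof_le_scard {θ : Ordinal.{0}} {A : Set Ordinal.{0}} (hA : A ⊆ Iio θ)
    (hu : ∀ α < θ, ∃ β ∈ A, α < β) : Cardinal.lift.{1} θ.cof ≤ scard A := by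
  by_contra! h
  rw [Ordinal.lift_cof] at h
  obtain ⟨β, hβ, hlt⟩ := hu _ (Ordinal.sSup_lt_of_lt_cof h fun i hi => hA hi)
  exact (le_csSup ⟨θ, fun x hx => (hA hx).le⟩ hβ).not_gt hlt

theorem card_otp (S : Set Ordinal.{0}) : (otp S).card = scard S := Ordinal.card_type _

theorem ord_scard_le_otp (S : Set Ordinal.{0}) : (scard S).ord ≤ otp S :=
  card_otp S ▸ Cardinal.ord_card_le (otp S)

theorem card_typein_eq_scard {T : Set Ordinal.{0}} {x : Ordinal.{0}} (hx : x ∈ T) :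
    (typein ((· < ·) : T → T → Prop) ⟨x, hx⟩).card = scard (T ∩ Iio x) := by
  rw [Ordinal.card_typein]
  exact Cardinal.mk_congr ⟨fun y => ⟨y.1.1, y.1.2, y.2⟩, fun z => ⟨⟨z.1, z.2.1⟩, z.2.2⟩,
    fun _ => rfl, fun _ => rfl⟩

theorem scard_inter_Iio_lt_of_otp_eq {T : Set Ordinal.{0}} {κ : Cardinal.{0}}
    (hT : otp T = Ordinal.lift.{1} κ.ord) {x : Ordinal.{0}} (hx : x ∈ T) :
    scard (T ∩ Iio x) < Cardinal.lift.{1} κ := by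
  have h := typein_lt_type ((· < ·) : T → T → Prop) ⟨x, hx⟩
  rw [← otp, hT, Cardinal.lift_ord, Cardinal.lt_ord] at h
  rwa [card_typein_eq_scard hx] at h

theorem otp_le_of_forall_scard_inter_Iio_lt {T : Set Ordinal.{0}} {κ : Cardinal.{0}}
    (h : ∀ x ∈ T, scard (T ∩ Iio x) < Cardinal.lift.{1} κ) :
    otp T ≤ Ordinal.lift.{1} κ.ord := by
  by_contra! hlt
  obtain ⟨⟨x, hx⟩, hxκ⟩ := typein_surj ((· < ·) : T → T → Prop) hlt
  have hcard := congrArg card hxκ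
  rw [card_typein_eq_scard hx, Cardinal.lift_ord, Cardinal.card_ord] at hcard
  exact (h x hx).ne hcard

theorem sInf_inter_Ioi_le {S : Set Ordinal.{0}} {y y' : Ordinal.{0}} (hyy' : y < y')
    (hy' : y' ∈ S ∪ accSet S) : sInf (S ∩ Ioi y) ≤ y' := by
  rcases hy' with hy' | hy'
  · exact csInf_le' ⟨hy', hyy'⟩
  · obtain ⟨β, hβ, hyβ, hβy'⟩ := (mem_accSet_iff.mp hy').2 y hyy'
    exact (csInf_le' (show β ∈ S ∩ Ioi y from ⟨hβ, hyβ⟩)).trans hβy'.le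

theorem otp_closureBelow {g : Set Ordinal.{0}} {δ : Ordinal.{0}} (hδ : IsSuccLimit δ)
    (hg : g ⊆ Iio δ) (hu : ∀ α < δ, ∃ β ∈ g, α < β)
    (hseg : ∀ y ∈ g, scard (g ∩ Iio y) < Cardinal.lift.{1} δ.cof) :
    otp (closureBelow g δ) = Ordinal.lift.{1} δ.cof.ord := by
  have hclub := isClubIn_closureBelow hg hu
  refine le_antisymm (otp_le_of_forall_scard_inter_Iio_lt fun x hx => ?_) ?_
  · -- `y ↦ min (g ∩ (y, δ))` embeds the closure below `x` into `g ∩ [0, x]`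
    have hnext : ∀ y < δ, sInf (g ∩ Ioi y) ∈ g ∧ y < sInf (g ∩ Ioi y) := fun y hy =>
      csInf_mem (s := g ∩ Ioi y) (by obtain ⟨β, hβ, hyβ⟩ := hu y hy; exact ⟨β, hβ, hyβ⟩)
    have hmono : StrictMonoOn (fun y => sInf (g ∩ Ioi y)) (closureBelow g δ) :=
      fun y _ y' hy' hyy' => (sInf_inter_Ioi_le hyy' hy'.2).trans_lt (hnext y' hy'.1).2
    obtain ⟨y, hy, hxy⟩ := hu _ (hδ.succ_lt hx.1)
    have hmaps : MapsTo (fun y => sInf (g ∩ Ioi y)) (closureBelow g δ ∩ Iio x)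
        (g ∩ Iio (succ x)) := fun y ⟨hy, hyx⟩ =>
      ⟨(hnext y hy.1).1, lt_succ_iff.mpr (sInf_inter_Ioi_le hyx hx.2)⟩
    calc scard (closureBelow g δ ∩ Iio x)
        = scard ((fun y => sInf (g ∩ Ioi y)) '' (closureBelow g δ ∩ Iio x)) :=
          (Cardinal.mk_image_eq_of_injOn _ _ (hmono.injOn.mono inter_subset_left)).symm
      _ ≤ scard (g ∩ Iio y) := Cardinal.mk_le_mk_of_subset (hmaps.image_subset.trans
          (inter_subset_inter_right _ (Iio_subset_Iio hxy.le)))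
      _ < _ := hseg y hy
  · calc Ordinal.lift.{1} δ.cof.ord = (Cardinal.lift.{1} δ.cof).ord := Cardinal.lift_ord _
      _ ≤ (scard (closureBelow g δ)).ord :=
          Cardinal.ord_le_ord.2 (lift_cof_le_scard hclub.1 hclub.2.1)
      _ ≤ otp (closureBelow g δ) := ord_scard_le_otp _

theorem exists_isClubIn_otp_eq_cof {δ : Ordinal.{0}} (hδ : IsSuccLimit δ) :
    ∃ c, IsClubIn c δ ∧ otp c = Ordinal.lift.{1} δ.cof.ord := by
  obtain ⟨f, hf⟩ := exists_isFundamentalSeq (o := δ) rfl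
  set g := range fun i => (f i).1
  have hg : g ⊆ Iio δ := by rintro _ ⟨i, rfl⟩; exact (f i).2
  have hu : ∀ α < δ, ∃ β ∈ g, α < β := fun α hα => by
    obtain ⟨_, ⟨i, rfl⟩, hi⟩ := hf.isCofinal_range ⟨succ α, hδ.succ_lt hα⟩
    exact ⟨_, ⟨i, rfl⟩, succ_le_iff.mp hi⟩
  refine ⟨closureBelow g δ, isClubIn_closureBelow hg hu, otp_closureBelow hδ hg hu ?_⟩
  rintro _ ⟨i, rfl⟩
  have hsub :
      g ∩ Iio (f i) ⊆ range fun j : Iio i.1 => (f ⟨j.1, mem_Iio.mpr (j.2.trans i.2)⟩).1 := by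
    rintro _ ⟨⟨j, rfl⟩, hji⟩
    exact ⟨⟨j.1, mem_Iio.mpr (hf.strictMono.lt_iff_lt.mp hji)⟩, rfl⟩
  calc scard (g ∩ Iio (f i))
        ≤ #(Iio i.1) := (Cardinal.mk_le_mk_of_subset hsub).trans Cardinal.mk_range_le
    _ = Cardinal.lift.{1} i.1.card := Cardinal.mk_Iio_ordinal _
    _ < Cardinal.lift.{1} δ.cof := Cardinal.lift_lt.2 (Cardinal.lt_ord.mp i.2)

theorem exists_cof_eq_forall_lt_exists_mem {κ : Cardinal.{0}} (hκ : κ.IsRegular)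
    {θ : Ordinal.{0}} {E : Set Ordinal.{0}} (hE : E ⊆ Iio θ) (hu : ∀ α < θ, ∃ β ∈ E, α < β)
    (hκθ : κ < θ.cof) : ∃ δ < θ, δ.cof = κ ∧ ∀ α < δ, ∃ β ∈ E, α < β ∧ β < δ := by
  have hs : ¬ BddAbove (E ∪ Ici θ) := fun h => not_bddAbove_Ici θ (h.mono subset_union_right)
  set f := enumOrd (E ∪ Ici θ)
  have hfE : ∀ j < κ.ord, f j ∈ E := by
    intro j hj
    by_contra hfj
    have hθf : θ ≤ f j := ((enumOrd_mem hs j).resolve_left hfj :)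
    -- otherwise `E` would be enumerated by fewer than `κ < cof θ` ordinals
    have hsub : E ⊆ f '' Iio j := by
      intro e he
      obtain ⟨k, rfl⟩ := enumOrd_surjective hs (Or.inl he)
      exact ⟨k, (enumOrd_lt_enumOrd hs).mp ((hE he).trans_le hθf), rfl⟩
    have hcard : scard E < Cardinal.lift.{1} θ.cof := by
      calc scard E ≤ #(Iio j) := (Cardinal.mk_le_mk_of_subset hsub).trans Cardinal.mk_image_le
        _ = Cardinal.lift.{1} j.card := Cardinal.mk_Iio_ordinal _
        _ < Cardinal.lift.{1} θ.cof := Cardinal.lift_lt.2 ((Cardinal.lt_ord.mp hj).trans hκθ)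
    exact hcard.not_ge (lift_cof_le_scard hE hu)
  have hκlim : IsSuccLimit κ.ord := Cardinal.isSuccLimit_ord hκ.aleph0_le
  have hmono : StrictMono fun j : Iio κ.ord => f j := fun i j hij => enumOrd_strictMono hs hij
  refine ⟨⨆ j : Iio κ.ord, f j, ?_, ?_, fun α hα => ?_⟩
  · refine Ordinal.lift_iSup_lt_of_lt_cof ?_ fun j => hE (hfE j j.2)
    rw [Cardinal.mk_Iio_ordinal, Cardinal.lift_lift, Cardinal.card_ord, ← Ordinal.lift_cof,
      Cardinal.lift_lt]
    exact hκθ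
  · rw [cof_iSup_Iio hmono hκlim.isSuccPrelimit, hκ.cof_ord]
  · obtain ⟨j, hj⟩ := Ordinal.lt_iSup_iff.mp hα
    have hj1 : succ j.1 < κ.ord := hκlim.succ_lt j.2
    refine ⟨f j, hfE j j.2, hj, ?_⟩
    exact (enumOrd_strictMono hs (lt_succ j.1)).trans_le
      (Ordinal.le_iSup (fun j : Iio κ.ord => f j) ⟨succ j.1, hj1⟩)

theorem isClubIn_iInter_Iio {θ : Ordinal.{0}} (hθ : ℵ₀ < θ.cof) {i : Ordinal.{0}}
    (hi : i.card < θ.cof) {C : Ordinal.{0} → Set Ordinal.{0}} (hC : ∀ j < i, IsClubIn (C j) θ) :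
    IsClubIn (Iio θ ∩ ⋂ j : Iio i, C j) θ := by
  refine ⟨inter_subset_left, fun α hα => ?_, fun α ⟨hacc, hαθ⟩ => ⟨hαθ, mem_iInter.2 fun j =>
    (hC j j.2).2.2 ⟨accSet_mono (inter_subset_right.trans (iInter_subset _ j)) hacc, hαθ⟩⟩⟩
  have hθlim : IsSuccLimit θ := one_lt_cof_iff.mp (Cardinal.one_lt_aleph0.trans hθ)
  -- close `succ α` under the "next point of `C j`" maps; the closure point lies in every `C j`
  let F : i.ToType → Ordinal.{0} → Ordinal.{0} := fun k x => sInf (C (ToType.mk.symm k) ∩ Ioi x)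
  have hF : ∀ k, ∀ x < θ, F k x ∈ C (ToType.mk.symm k) ∧ x < F k x ∧ F k x < θ :=
    fun k x hx => (hC _ (ToType.mk.symm k).2).sInf_inter_Ioi hx
  have hβθ : nfpFamily F (succ α) < θ :=
    nfpFamily_lt_ord hθ (by rwa [Cardinal.mk_toType]) (fun k x hx => (hF k x hx).2.2)
      (hθlim.succ_lt hα)
  have hfoldr : ∀ l, List.foldr F (succ α) l < θ :=
    fun l => (foldr_le_nfpFamily F _ l).trans_lt hβθ
  refine ⟨nfpFamily F (succ α), ⟨hβθ, mem_iInter.2 fun j => ?_⟩,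
    (lt_succ α).trans_le (le_nfpFamily F _)⟩
  set k := ToType.mk j
  have hsup : nfpFamily F (succ α) = sSup (range fun l => F k (List.foldr F (succ α) l)) := by
    refine le_antisymm (nfpFamily_le fun l => ?_) (csSup_le (range_nonempty _) ?_)
    · exact (hF k _ (hfoldr l)).2.1.le.trans (le_csSup Ordinal.bddAbove_of_small ⟨l, rfl⟩)
    · rintro _ ⟨l, rfl⟩
      exact foldr_le_nfpFamily F _ (k :: l)
  have hkj : ToType.mk.symm k = j := by simp [k]
  rw [hsup]
  refine (hC j j.2).sSup_mem ?_ (range_nonempty _) (hsup ▸ hβθ)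
  rintro _ ⟨l, rfl⟩
  exact hkj ▸ (hF k _ (hfoldr l)).1

def iterInter (F : Set Ordinal.{0} → Set Ordinal.{0}) (θ : Ordinal.{0}) :
    Ordinal.{0} → Set Ordinal.{0} :=
  Ordinal.lt_wf.fix fun i IH => Iio θ ∩ ⋂ j : Iio i, F (IH j j.2)

section iterInter
variable {F : Set Ordinal.{0} → Set Ordinal.{0}} {θ : Ordinal.{0}}

theorem iterInter_eq (i : Ordinal.{0}) :
    iterInter F θ i = Iio θ ∩ ⋂ j : Iio i, F (iterInter F θ j) := by
  rw [iterInter, WellFounded.fix_eq]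

theorem iterInter_antitone : Antitone (iterInter F θ) := by
  intro i j hij x hx
  rw [iterInter_eq] at hx ⊢
  exact ⟨hx.1, mem_iInter.2 fun k => mem_iInter.1 hx.2 ⟨k, mem_Iio.mpr (k.2.trans_le hij)⟩⟩

theorem iterInter_subset {i j : Ordinal.{0}} (hij : i < j) :
    iterInter F θ j ⊆ F (iterInter F θ i) := by
  intro x hx
  rw [iterInter_eq] at hx
  exact mem_iInter.1 hx.2 ⟨i, hij⟩

theorem isClubIn_iterInter (hθ : ℵ₀ < θ.cof) (hF : ∀ D, IsClubIn (F D) θ) {i : Ordinal.{0}}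
    (hi : i.card < θ.cof) : IsClubIn (iterInter F θ i) θ := by
  rw [iterInter_eq]
  exact isClubIn_iInter_Iio hθ hi fun j _ => hF _

end iterInter

def supsBelow (D b : Set Ordinal.{0}) : Set Ordinal.{0} :=
  (fun β => sSup (D ∩ Iio β)) '' {β ∈ b | (D ∩ Iio β).Nonempty}

theorem supsBelow_subset_Iio {D b : Set Ordinal.{0}} {δ : Ordinal.{0}} (hb : b ⊆ Iio δ) :
    supsBelow D b ⊆ Iio δ := by
  rintro _ ⟨β, ⟨hβ, hne⟩, rfl⟩
  exact (csSup_le hne fun y hy => hy.2.le).trans_lt (hb hβ)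

theorem supsBelow_unbounded {D b : Set Ordinal.{0}} {δ : Ordinal.{0}}
    (hb : ∀ α < δ, ∃ β ∈ b, α < β) (hD : ∀ α < δ, ∃ d ∈ D, α < d ∧ d < δ) :
    ∀ α < δ, ∃ x ∈ supsBelow D b, α < x := by
  intro α hα
  obtain ⟨d, hd, hαd, hdδ⟩ := hD α hα
  obtain ⟨β, hβ, hdβ⟩ := hb d hdδ
  exact ⟨_, ⟨β, ⟨hβ, d, hd, hdβ⟩, rfl⟩,
    hαd.trans_le (le_csSup ⟨β, fun _ hy => hy.2.le⟩ ⟨hd, hdβ⟩)⟩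

theorem scard_supsBelow_inter_Iio_le {D b : Set Ordinal.{0}} {y : Ordinal.{0}}
    (hy : y ∈ supsBelow D b) : ∃ β ∈ b, scard (supsBelow D b ∩ Iio y) ≤ scard (b ∩ Iio β) := by
  obtain ⟨β₀, ⟨hβ₀, hne₀⟩, rfl⟩ := hy
  refine ⟨β₀, hβ₀, (Cardinal.mk_le_mk_of_subset (t := (fun β => sSup (D ∩ Iio β)) '' (b ∩ Iio β₀))
    ?_).trans Cardinal.mk_image_le⟩
  rintro _ ⟨⟨β, ⟨hβ, -⟩, rfl⟩, hlt⟩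
  refine ⟨β, ⟨hβ, mem_Iio.mpr (lt_of_not_ge fun hβ₀β => (not_le_of_gt (mem_Iio.mp hlt)) ?_)⟩, rfl⟩
  exact csSup_le_csSup ⟨β, fun _ hz => hz.2.le⟩ hne₀
    (inter_subset_inter_right _ (Iio_subset_Iio hβ₀β))

open Classical in
/-- The candidate `c_δ^D` of the proof; the fallback `b δ` only serves to make every value a club
of type `cof δ`. -/
def clubGuess (b : Ordinal.{0} → Set Ordinal.{0}) (D : Set Ordinal.{0}) (δ : Ordinal.{0}) :
    Set Ordinal.{0} :=
  if ∀ α < δ, ∃ x ∈ supsBelow D (b δ), α < x then closureBelow (supsBelow D (b δ)) δ else b δ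

theorem clubGuess_spec {b : Ordinal.{0} → Set Ordinal.{0}} {D : Set Ordinal.{0}} {δ : Ordinal.{0}}
    (hδ : IsSuccLimit δ) (hb : IsClubIn (b δ) δ) (hbotp : otp (b δ) = Ordinal.lift.{1} δ.cof.ord) :
    IsClubIn (clubGuess b D δ) δ ∧ otp (clubGuess b D δ) = Ordinal.lift.{1} δ.cof.ord := by
  unfold clubGuess
  split_ifs with hu
  · refine ⟨isClubIn_closureBelow (supsBelow_subset_Iio hb.1) hu,
      otp_closureBelow hδ (supsBelow_subset_Iio hb.1) hu fun y hy => ?_⟩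
    obtain ⟨β, hβ, hle⟩ := scard_supsBelow_inter_Iio_le hy
    exact hle.trans_lt (scard_inter_Iio_lt_of_otp_eq hbotp hβ)
  · exact ⟨hb, hbotp⟩

theorem exists_supsBelow_subset_succ {θ μ : Ordinal.{0}} (hμ : IsSuccLimit μ)
    {b : Set Ordinal.{0}} (hb : b ⊆ Iio θ) (hbμ : scard b < Cardinal.lift.{1} μ.cof)
    {D : Ordinal.{0} → Set Ordinal.{0}} (hD : Antitone D) (hDclub : ∀ i < μ, IsClubIn (D i) θ) :
    ∃ i < μ, supsBelow (D i) b ⊆ D (succ i) := by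
  by_contra! h
  have hwit : ∀ i : Iio μ, ∃ β ∈ b, (D i ∩ Iio β).Nonempty ∧ sSup (D i ∩ Iio β) ∉ D (succ i) :=
    fun i => by
      obtain ⟨_, ⟨β, ⟨hβ, hne⟩, rfl⟩, hx⟩ := not_subset.mp (h i i.2)
      exact ⟨β, hβ, hne, hx⟩
  choose β hβb hne hnot using hwit
  obtain ⟨β₀, hT⟩ : ∃ β₀ : b, IsCofinal {i | β i = β₀} := by
    refine isCofinal_of_isCofinal_iUnion (s := fun β₀ : b => {i : Iio μ | β i = β₀}) ?_ ?_
    · exact fun i => ⟨i, mem_iUnion.2 ⟨⟨β i, hβb i⟩, rfl⟩, le_rfl⟩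
    · rwa [Ordinal.cof_Iio, ← Ordinal.lift_cof]
  -- `i ↦ sup (D i ∩ β₀)` is antitone, so it is constant from its minimum `i₀` on the fibre onwards
  set ξ : Iio μ → Ordinal.{0} := fun i => sSup (D i ∩ Iio β₀)
  have hTne : {i | β i = β₀}.Nonempty :=
    have : Nonempty (Iio μ) := ⟨⟨0, hμ.bot_lt⟩⟩
    hT.nonempty
  set i₀ := Function.argminOn ξ _ hTne
  have hi₀ : β i₀ = β₀ := Function.argminOn_mem ξ _ hTne
  obtain ⟨i₁, hi₁ : β i₁ = β₀, hi₀i₁⟩ := hT ⟨succ i₀.1, hμ.succ_lt i₀.2⟩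
  have hne₁ : (D i₁ ∩ Iio β₀).Nonempty := hi₁ ▸ hne i₁
  have hξ : ξ i₀ = ξ i₁ := by
    refine le_antisymm (Function.argminOn_le ξ _ hi₁) ?_
    exact csSup_le_csSup ⟨β₀, fun _ hx => hx.2.le⟩ hne₁
      (inter_subset_inter_left _ (hD ((le_succ i₀.1).trans hi₀i₁)))
  have hmem : ξ i₁ ∈ D i₁ := (hDclub i₁ i₁.2).sSup_mem inter_subset_left hne₁
    ((csSup_le hne₁ fun _ hx => hx.2.le).trans_lt (hb β₀.2))
  refine hnot i₀ ?_
  rw [hi₀]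
  exact hD hi₀i₁ (hξ.symm ▸ hmem : ξ i₀ ∈ D i₁)

theorem exists_clubGuess_subset {κ lam : Cardinal.{0}} (hκ : κ.IsRegular) (hlam : lam.IsRegular)
    (hlt : succ κ < lam) {b : Ordinal.{0} → Set Ordinal.{0}}
    (hb : ∀ δ, δ.cof = κ → IsClubIn (b δ) δ ∧ otp (b δ) = Ordinal.lift.{1} κ.ord) :
    ∃ D, ∀ E, IsClubIn E lam.ord → ∃ δ < lam.ord, δ.cof = κ ∧ clubGuess b D δ ⊆ E := by
  by_contra! h
  choose F hFclub hF using h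
  have hcof : lam.ord.cof = lam := hlam.cof_ord
  have hκlam : κ < lam := (lt_succ κ).trans hlt
  set μ := (succ κ).ord
  have hclub : ∀ i ≤ μ, IsClubIn (iterInter F lam.ord i) lam.ord := fun i hi => by
    refine isClubIn_iterInter (by rw [hcof]; exact hκ.aleph0_le.trans_lt hκlam) hFclub ?_
    rw [hcof]
    exact (card_le_card hi).trans_lt ((Cardinal.card_ord _).trans_lt hlt)
  obtain ⟨δ, hδθ, hδ, hE⟩ := exists_cof_eq_forall_lt_exists_mem hκ (hclub μ le_rfl).1
    (hclub μ le_rfl).2.1 (by rwa [hcof])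
  obtain ⟨hbδ, hbotp⟩ := hb δ hδ
  have hbμ : scard (b δ) < Cardinal.lift.{1} μ.cof := by
    rw [← card_otp, hbotp, ← Ordinal.lift_card, Cardinal.card_ord,
      (Cardinal.isRegular_succ hκ.aleph0_le).cof_ord]
    exact Cardinal.lift_lt.2 (lt_succ κ)
  obtain ⟨i, hiμ, hsub⟩ := exists_supsBelow_subset_succ
    (Cardinal.isSuccLimit_ord (hκ.aleph0_le.trans (le_succ κ)))
    (hbδ.1.trans (Iio_subset_Iio hδθ.le)) hbμ iterInter_antitone fun i hi => hclub i hi.le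
  have hu : ∀ α < δ, ∃ x ∈ supsBelow (iterInter F lam.ord i) (b δ), α < x :=
    supsBelow_unbounded hbδ.2.1 fun α hα =>
      (hE α hα).imp fun d ⟨hd, hαd⟩ => ⟨iterInter_antitone hiμ.le hd, hαd⟩
  refine hF (iterInter F lam.ord i) δ hδθ hδ ?_
  rw [clubGuess, if_pos hu]
  exact closureBelow_subset (hsub.trans (iterInter_subset (lt_succ i))) hδθ.le (hFclub _).2.2

/-- Club guessing: if `κ⁺ < λ` are regular cardinals, there is a
sequence `⟨c_δ : δ < λ, cf δ = κ⟩` of clubs `c_δ ⊆ δ` of order type `κ`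
guessing every club of `λ`. -/
theorem stmt_9 (κ lam : Cardinal.{0}) (hκ : κ.IsRegular) (hlam : lam.IsRegular)
    (hlt : (Order.succ κ) < lam) :
    ∃ c : Ordinal.{0} → Set Ordinal.{0},
      (∀ δ, δ < lam.ord → δ.cof = κ →
        IsClubIn (c δ) δ ∧ otp (c δ) = Ordinal.lift.{1,0} κ.ord) ∧
      ∀ E : Set Ordinal.{0}, IsClubIn E lam.ord →
        ∃ δ, δ < lam.ord ∧ δ.cof = κ ∧ c δ ⊆ E := by
  have hlim : ∀ δ : Ordinal.{0}, δ.cof = κ → IsSuccLimit δ := fun δ hδ =>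
    one_lt_cof_iff.mp (hδ ▸ Cardinal.one_lt_aleph0.trans_le hκ.aleph0_le)
  have hbase : ∀ δ : Ordinal.{0}, ∃ c, δ.cof = κ → IsClubIn c δ ∧ otp c = Ordinal.lift.{1} κ.ord :=
    fun δ => by
      by_cases hδ : δ.cof = κ
      · obtain ⟨c, hc⟩ := exists_isClubIn_otp_eq_cof (hlim δ hδ)
        exact ⟨c, fun _ => hδ ▸ hc⟩
      · exact ⟨∅, fun h => absurd h hδ⟩
  choose b hb using hbase
  obtain ⟨D, hD⟩ := exists_clubGuess_subset hκ hlam hlt hb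
  refine ⟨clubGuess b D, fun δ _ hδ => ?_, fun E hE => ?_⟩
  · have := clubGuess_spec (D := D) (hlim δ hδ) (hb δ hδ).1 (hδ ▸ (hb δ hδ).2)
    rwa [hδ] at this
  · exact hD E hE
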